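/- Let D₁, D₂ ⊆ ℂ be domains. For all a = (a₁,a₂) ∈ D₁×D₂ and X = (X₁,X₂) ∈ ℂ², the Kobayashi–Royden pseudometric of the product satisfies κ_{D₁×D₂}(a;X) = max{κ_{D₁}(a₁;X₁), κ_{D₂}(a₂;X₂)}. -/

import Mathlib

open Set Metric Complex

noncomputable section

/-- The open unit disc `E` in `ℂ`. -/
def unitDisc : Set ℂ := Metric.ball (0 : ℂ) 1

/-- The Kobayashi–Royden pseudometric of a set `D` in a complex normed space:
`κ_D(z;X) = inf {|α| : ∃ holomorphic f : E → D, f(0) = z, α·f'(0) = X}`. -/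
def kobayashi {V : Type*} [NormedAddCommGroup V] [NormedSpace ℂ V]
    (D : Set V) (z X : V) : ℝ :=
  sInf {r : ℝ | ∃ (α : ℂ) (f : ℂ → V), ‖α‖ = r ∧
    DifferentiableOn ℂ f unitDisc ∧ MapsTo f unitDisc D ∧
    f 0 = z ∧ α • deriv f 0 = X}

/-- The Hahn pseudometric of a set `D` in a complex normed space:
`h_D(z;X) = inf {|α| : ∃ injective holomorphic f : E → D, f(0) = z, α·f'(0) = X}`. -/
def hahn {V : Type*} [NormedAddCommGroup V] [NormedSpace ℂ V]
    (D : Set V) (z X : V) : ℝ :=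
  sInf {r : ℝ | ∃ (α : ℂ) (f : ℂ → V), ‖α‖ = r ∧
    DifferentiableOn ℂ f unitDisc ∧ MapsTo f unitDisc D ∧ InjOn f unitDisc ∧
    f 0 = z ∧ α • deriv f 0 = X}

/-!
Write `S_D(z;X) ⊆ ℝ` for the set whose infimum is `κ_D(z;X)`. Composing with the projections
shows `S_{D₁×D₂} ⊆ S_{D₁} ∩ S_{D₂}`. Precomposing a disc with a contraction `w ↦ c w`
makes each `S_D` an upper set, and in particular lets both factor discs use the same real
scale `α = r`, so they combine into a disc in the product: `S_{D₁×D₂} = S_{D₁} ∩ S_{D₂}`.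
For nonempty upper sets of reals, the infimum of the intersection is the max of the infima.
-/

theorem csInf_inter_of_isUpperSet {α : Type*} [ConditionallyCompleteLinearOrder α]
    [DenselyOrdered α] {S T : Set α} (hS : IsUpperSet S) (hT : IsUpperSet T)
    (hSne : S.Nonempty) (hTne : T.Nonempty) (hSbdd : BddBelow S) (hTbdd : BddBelow T) :
    sInf (S ∩ T) = max (sInf S) (sInf T) := by
  obtain ⟨s, hs⟩ := hSne
  obtain ⟨t, ht⟩ := hTne
  have hne : (S ∩ T).Nonempty :=
    ⟨max s t, hS (le_max_left s t) hs, hT (le_max_right s t) ht⟩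
  have hbdd : BddBelow (S ∩ T) := hSbdd.mono inter_subset_left
  refine le_antisymm (le_of_forall_gt_imp_ge_of_dense fun x hx => csInf_le hbdd ?_)
    (max_le (csInf_le_csInf hSbdd hne inter_subset_left)
      (csInf_le_csInf hTbdd hne inter_subset_right))
  obtain ⟨s', hs', hs'x⟩ := exists_lt_of_csInf_lt ⟨s, hs⟩ (le_max_left _ _ |>.trans_lt hx)
  obtain ⟨t', ht', ht'x⟩ := exists_lt_of_csInf_lt ⟨t, ht⟩ (le_max_right _ _ |>.trans_lt hx)
  exact ⟨hS hs'x.le hs', hT ht'x.le ht'⟩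

lemma zero_mem_unitDisc : (0 : ℂ) ∈ unitDisc := mem_ball_self one_pos

lemma mapsTo_const_mul_unitDisc {c : ℂ} (hc : ‖c‖ ≤ 1) :
    MapsTo (c * ·) unitDisc unitDisc := fun w hw => by
  simp only [unitDisc, mem_ball_zero_iff, norm_mul] at hw ⊢
  exact (mul_le_of_le_one_left (norm_nonneg w) hc).trans_lt hw

lemma DifferentiableOn.hasDerivAt_zero_of_unitDisc {V : Type*} [NormedAddCommGroup V]
    [NormedSpace ℂ V] {f : ℂ → V} (hf : DifferentiableOn ℂ f unitDisc) :
    HasDerivAt f (_root_.deriv f 0) 0 :=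
  (hf.differentiableAt (isOpen_ball.mem_nhds zero_mem_unitDisc)).hasDerivAt

section KobayashiSet

variable {V W : Type*} [NormedAddCommGroup V] [NormedSpace ℂ V]
  [NormedAddCommGroup W] [NormedSpace ℂ W]

def kobayashiSet (D : Set V) (z X : V) : Set ℝ :=
  {r : ℝ | ∃ (α : ℂ) (f : ℂ → V), ‖α‖ = r ∧
    DifferentiableOn ℂ f unitDisc ∧ MapsTo f unitDisc D ∧
    f 0 = z ∧ α • deriv f 0 = X}

theorem kobayashi_eq_sInf (D : Set V) (z X : V) :
    kobayashi D z X = sInf (kobayashiSet D z X) := rfl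

theorem nonneg_of_mem_kobayashiSet {D : Set V} {z X : V} {r : ℝ}
    (hr : r ∈ kobayashiSet D z X) : 0 ≤ r := by
  obtain ⟨α, f, rfl, -⟩ := hr
  exact norm_nonneg α

theorem bddBelow_kobayashiSet (D : Set V) (z X : V) : BddBelow (kobayashiSet D z X) :=
  ⟨0, fun _ => nonneg_of_mem_kobayashiSet⟩

/-- The disc `w ↦ z + w • (ε • X)` stays in a ball `B(z, r) ⊆ D` once `ε‖X‖ < r`. -/
theorem kobayashiSet_nonempty {D : Set V} (hD : IsOpen D) {z : V} (hz : z ∈ D) (X : V) :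
    (kobayashiSet D z X).Nonempty := by
  obtain ⟨r, hr, hball⟩ := Metric.isOpen_iff.mp hD z hz
  set ε : ℝ := r / (‖X‖ + 1)
  have hε : 0 < ε := by positivity
  have hεX : ε * ‖X‖ < r := by
    rw [div_mul_eq_mul_div, div_lt_iff₀ (by positivity)]
    nlinarith
  refine ⟨_, ((ε : ℂ))⁻¹, fun w => z + w • ((ε : ℂ) • X), rfl, by fun_prop, fun w hw => ?_,
    by simp, ?_⟩
  · apply hball
    rw [mem_ball_iff_norm, add_sub_cancel_left, norm_smul, norm_smul, Complex.norm_real,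
      Real.norm_of_nonneg hε.le]
    rw [unitDisc, mem_ball_zero_iff] at hw
    nlinarith [norm_nonneg w, norm_nonneg X]
  · have hd : HasDerivAt (fun w : ℂ => z + w • ((ε : ℂ) • X)) ((ε : ℂ) • X) 0 := by
      simpa using ((hasDerivAt_id (0 : ℂ)).smul_const ((ε : ℂ) • X)).const_add z
    rw [hd.deriv, smul_smul, inv_mul_cancel₀ (by exact_mod_cast hε.ne'), one_smul]

theorem kobayashiSet_subset_of_mapsTo (L : V →L[ℂ] W) {D : Set V} {D' : Set W}
    (hL : MapsTo L D D') (z X : V) : kobayashiSet D z X ⊆ kobayashiSet D' (L z) (L X) := by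
  rintro r ⟨α, f, hα, hf, hfD, rfl, rfl⟩
  refine ⟨α, L ∘ f, hα, L.differentiable.comp_differentiableOn hf, hL.comp hfD, rfl, ?_⟩
  rw [(L.hasFDerivAt.comp_hasDerivAt 0 hf.hasDerivAt_zero_of_unitDisc).deriv, L.map_smul]

/-- Precomposing with `w ↦ (α / s) * w` turns the scale `α` into any real `s ≥ ‖α‖`. -/
theorem exists_real_scale_of_mem_kobayashiSet {D : Set V} {z X : V} {r s : ℝ}
    (hr : r ∈ kobayashiSet D z X) (hrs : r ≤ s) :
    ∃ f : ℂ → V, DifferentiableOn ℂ f unitDisc ∧ MapsTo f unitDisc D ∧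
      f 0 = z ∧ (s : ℂ) • deriv f 0 = X := by
  obtain ⟨α, f, rfl, hf, hfD, rfl, rfl⟩ := hr
  rcases (norm_nonneg α).trans hrs |>.eq_or_lt with rfl | hs
  · obtain rfl : α = 0 := norm_le_zero_iff.mp hrs
    exact ⟨fun _ => f 0, differentiableOn_const _, fun _ _ => hfD zero_mem_unitDisc, rfl,
      by simp⟩
  have hs' : (s : ℂ) ≠ 0 := by exact_mod_cast hs.ne'
  have hc : ‖α / s‖ ≤ 1 := by
    rw [norm_div, Complex.norm_real, Real.norm_of_nonneg hs.le]
    exact div_le_one_of_le₀ hrs hs.le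
  have hd : HasDerivAt (fun w => f (α / s * w)) ((α / s) • deriv f 0) 0 := by
    have hlin : HasDerivAt (fun w : ℂ => α / s * w) (α / s) 0 := by
      simpa using (hasDerivAt_id (0 : ℂ)).const_mul (α / s)
    have hf0 : HasDerivAt f (deriv f 0) (α / s * 0) := by
      simpa using hf.hasDerivAt_zero_of_unitDisc
    exact hf0.scomp (0 : ℂ) hlin
  refine ⟨fun w => f (α / s * w), hf.comp (by fun_prop) (mapsTo_const_mul_unitDisc hc),
    hfD.comp (mapsTo_const_mul_unitDisc hc), by simp, ?_⟩
  rw [hd.deriv, smul_smul, mul_div_cancel₀ _ hs']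

theorem isUpperSet_kobayashiSet (D : Set V) (z X : V) : IsUpperSet (kobayashiSet D z X) := by
  intro r s hrs hr
  obtain ⟨f, hf, hfD, hf0, hfX⟩ := exists_real_scale_of_mem_kobayashiSet hr hrs
  exact ⟨s, f, by simpa using (nonneg_of_mem_kobayashiSet hr).trans hrs, hf, hfD, hf0, hfX⟩

theorem kobayashiSet_prod (D₁ : Set V) (D₂ : Set W) (z : V × W) (X : V × W) :
    kobayashiSet (D₁ ×ˢ D₂) z X = kobayashiSet D₁ z.1 X.1 ∩ kobayashiSet D₂ z.2 X.2 := by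
  refine Subset.antisymm (fun r hr => ⟨?_, ?_⟩) fun r ⟨hr₁, hr₂⟩ => ?_
  · exact kobayashiSet_subset_of_mapsTo (.fst ℂ V W) (fun _ h => h.1) z X hr
  · exact kobayashiSet_subset_of_mapsTo (.snd ℂ V W) (fun _ h => h.2) z X hr
  obtain ⟨f₁, hf₁, hf₁D, hf₁0, hf₁X⟩ := exists_real_scale_of_mem_kobayashiSet hr₁ le_rfl
  obtain ⟨f₂, hf₂, hf₂D, hf₂0, hf₂X⟩ := exists_real_scale_of_mem_kobayashiSet hr₂ le_rfl
  have hd := (hf₁.hasDerivAt_zero_of_unitDisc).prodMk hf₂.hasDerivAt_zero_of_unitDisc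
  refine ⟨r, fun w => (f₁ w, f₂ w), by simpa using nonneg_of_mem_kobayashiSet hr₁,
    hf₁.prodMk hf₂, fun w hw => ⟨hf₁D hw, hf₂D hw⟩, by simp [hf₁0, hf₂0], ?_⟩
  rw [hd.deriv, Prod.smul_mk, hf₁X, hf₂X]

theorem kobayashi_prod {D₁ : Set V} {D₂ : Set W} (hD₁ : IsOpen D₁) (hD₂ : IsOpen D₂)
    {z : V × W} (hz : z ∈ D₁ ×ˢ D₂) (X : V × W) :
    kobayashi (D₁ ×ˢ D₂) z X = max (kobayashi D₁ z.1 X.1) (kobayashi D₂ z.2 X.2) := by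
  rw [kobayashi_eq_sInf, kobayashiSet_prod]
  exact csInf_inter_of_isUpperSet (isUpperSet_kobayashiSet _ _ _)
    (isUpperSet_kobayashiSet _ _ _) (kobayashiSet_nonempty hD₁ hz.1 _)
    (kobayashiSet_nonempty hD₂ hz.2 _) (bddBelow_kobayashiSet _ _ _) (bddBelow_kobayashiSet _ _ _)

end KobayashiSet

/-- Product formula for the Kobayashi–Royden pseudometric:
`κ_{D₁×D₂}(a;X) = max (κ_{D₁}(a₁;X₁)) (κ_{D₂}(a₂;X₂))`. -/
theorem stmt9 (D₁ D₂ : Set ℂ) (hD₁ : IsOpen D₁ ∧ IsConnected D₁)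
    (hD₂ : IsOpen D₂ ∧ IsConnected D₂) :
    ∀ a ∈ D₁ ×ˢ D₂, ∀ X : ℂ × ℂ,
      kobayashi (D₁ ×ˢ D₂) a X = max (kobayashi D₁ a.1 X.1) (kobayashi D₂ a.2 X.2) :=
  fun _ ha X => kobayashi_prod hD₁.1 hD₂.1 ha X
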